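/- Let a < b, T > 0, let f : ℝ → ℝ be continuous, and let u : (−1,1)×(0,T) → (a,b) have continuous partial derivatives u_x, u_xx, u_t and satisfy u_t(ξ,t) = u_xx(ξ,t) + f(u(ξ,t)) u_x(ξ,t)³ and u_x(ξ,t) > 0 for all (ξ,t) ∈ (−1,1)×(0,T). Let x : (a,b)×(0,T) → (−1,1) have continuous partial derivatives x_u, x_uu, x_t and satisfy x(u(ξ,t),t) = ξ for all (ξ,t) ∈ (−1,1)×(0,T) and u(x(v,t),t) = v for all (v,t) ∈ (a,b)×(0,T). Then x_u(v,t) > 0 and x_t(v,t) = (x_uu(v,t) − f(v))/x_u(v,t)² for all (v,t) ∈ (a,b)×(0,T). -/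

import Mathlib

/-! Differentiating `u (x v t) t = v` once and twice in `v` gives `u_x x_u = 1` and
`u_xx x_u² + u_x x_uu = 0`; differentiating it in `t` gives `u_x x_t + u_t = 0`. The last step
needs the chain rule for `(ξ, t) ↦ u ξ t`, which is differentiable because its partial derivatives
are continuous. Substituting `u_x = 1 / x_u` and `u_xx = -x_uu / x_u³` into the equation for `u`
gives the equation for `x`. -/

open Filter Set Topology

theorem hasStrictFDerivAt_uncurry_of_hasDerivAt {u u₁ u₂ : ℝ → ℝ → ℝ} {p : ℝ × ℝ}
    (hu₁ : ∀ᶠ q in 𝓝 p, HasDerivAt (u · q.2) (u₁ q.1 q.2) q.1)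
    (hu₂ : ∀ᶠ q in 𝓝 p, HasDerivAt (u q.1 ·) (u₂ q.1 q.2) q.2)
    (hc₁ : ContinuousAt ↿u₁ p) (hc₂ : ContinuousAt ↿u₂ p) :
    HasStrictFDerivAt ↿u
      ((ContinuousLinearMap.toSpanSingleton ℝ (u₁ p.1 p.2)).coprod
        (ContinuousLinearMap.toSpanSingleton ℝ (u₂ p.1 p.2))) p :=
  hasStrictFDerivAt_uncurry_coprod (f₁ := fun ξ s => .toSpanSingleton ℝ (u₁ ξ s))
    (f₂ := fun ξ s => .toSpanSingleton ℝ (u₂ ξ s))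
    (hu₁.mono fun _ h => h.hasFDerivAt) (hu₂.mono fun _ h => h.hasFDerivAt)
    ((ContinuousLinearMap.toSpanSingletonCLE (𝕜 := ℝ) (E := ℝ)).continuous.continuousAt.comp hc₁)
    ((ContinuousLinearMap.toSpanSingletonCLE (𝕜 := ℝ) (E := ℝ)).continuous.continuousAt.comp hc₂)

theorem HasDerivAt.uncurry_comp {u u₁ u₂ : ℝ → ℝ → ℝ} {g : ℝ → ℝ} {g' t : ℝ}
    (hu₁ : ∀ᶠ q in 𝓝 (g t, t), HasDerivAt (u · q.2) (u₁ q.1 q.2) q.1)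
    (hu₂ : ∀ᶠ q in 𝓝 (g t, t), HasDerivAt (u q.1 ·) (u₂ q.1 q.2) q.2)
    (hc₁ : ContinuousAt ↿u₁ (g t, t)) (hc₂ : ContinuousAt ↿u₂ (g t, t))
    (hg : HasDerivAt g g' t) :
    HasDerivAt (fun s => u (g s) s) (u₁ (g t) t * g' + u₂ (g t) t) t :=
  ((hasStrictFDerivAt_uncurry_of_hasDerivAt hu₁ hu₂ hc₁ hc₂).hasFDerivAt.comp_hasDerivAt_of_eq t
    (hg.prodMk (hasDerivAt_id t)) rfl).congr_deriv (by simp [mul_comm])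

theorem appendix_u_to_x (a b T : ℝ)
    (f : ℝ → ℝ)
    (u ux uxx ut : ℝ → ℝ → ℝ) (x xu xuu xt : ℝ → ℝ → ℝ)
    -- u maps into (a,b) and has continuous partial derivatives ux, uxx, ut
    (hux : ∀ ξ ∈ Set.Ioo (-1:ℝ) 1, ∀ t ∈ Set.Ioo 0 T,
      HasDerivAt (fun ζ => u ζ t) (ux ξ t) ξ)
    (huxx : ∀ ξ ∈ Set.Ioo (-1:ℝ) 1, ∀ t ∈ Set.Ioo 0 T,
      HasDerivAt (fun ζ => ux ζ t) (uxx ξ t) ξ)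
    (hut : ∀ ξ ∈ Set.Ioo (-1:ℝ) 1, ∀ t ∈ Set.Ioo 0 T,
      HasDerivAt (fun s => u ξ s) (ut ξ t) t)
    (hcux : ContinuousOn (fun p : ℝ × ℝ => ux p.1 p.2) (Set.Ioo (-1:ℝ) 1 ×ˢ Set.Ioo 0 T))
    (hcut : ContinuousOn (fun p : ℝ × ℝ => ut p.1 p.2) (Set.Ioo (-1:ℝ) 1 ×ˢ Set.Ioo 0 T))
    -- u solves the PDE and is strictly increasing in space
    (hpde : ∀ ξ ∈ Set.Ioo (-1:ℝ) 1, ∀ t ∈ Set.Ioo 0 T,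
      ut ξ t = uxx ξ t + f (u ξ t) * (ux ξ t) ^ 3)
    (huxpos : ∀ ξ ∈ Set.Ioo (-1:ℝ) 1, ∀ t ∈ Set.Ioo 0 T, 0 < ux ξ t)
    -- x maps into (-1,1) and has continuous partial derivatives xu, xuu, xt
    (hxmaps : ∀ v ∈ Set.Ioo a b, ∀ t ∈ Set.Ioo 0 T, x v t ∈ Set.Ioo (-1:ℝ) 1)
    (hxu : ∀ v ∈ Set.Ioo a b, ∀ t ∈ Set.Ioo 0 T,
      HasDerivAt (fun w => x w t) (xu v t) v)
    (hxuu : ∀ v ∈ Set.Ioo a b, ∀ t ∈ Set.Ioo 0 T,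
      HasDerivAt (fun w => xu w t) (xuu v t) v)
    (hxt : ∀ v ∈ Set.Ioo a b, ∀ t ∈ Set.Ioo 0 T,
      HasDerivAt (fun s => x v s) (xt v t) t)
    -- x(·,t) and u(·,t) are mutually inverse
    (hinv2 : ∀ v ∈ Set.Ioo a b, ∀ t ∈ Set.Ioo 0 T, u (x v t) t = v) :
    ∀ v ∈ Set.Ioo a b, ∀ t ∈ Set.Ioo 0 T,
      0 < xu v t ∧ xt v t = (xuu v t - f v) / (xu v t) ^ 2 := by
  intro v hv t ht
  have hξ := hxmaps v hv t ht
  have hux_xu : ∀ w ∈ Ioo a b, ux (x w t) t * xu w t = 1 := fun w hw =>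
    (((hux _ (hxmaps w hw t ht) t ht).comp w (hxu w hw t ht)).congr_of_eventuallyEq
      (eventuallyEq_of_mem (isOpen_Ioo.mem_nhds hw) fun z hz => (hinv2 z hz t ht).symm)).unique
      (hasDerivAt_id w)
  have huxx_xu : uxx (x v t) t * xu v t * xu v t + ux (x v t) t * xuu v t = 0 :=
    ((((huxx _ hξ t ht).comp v (hxu v hv t ht)).mul (hxuu v hv t ht)).congr_of_eventuallyEq
      (eventuallyEq_of_mem (isOpen_Ioo.mem_nhds hv) fun z hz => (hux_xu z hz).symm)).unique
      (hasDerivAt_const v 1)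
  have hmem : Ioo (-1:ℝ) 1 ×ˢ Ioo 0 T ∈ 𝓝 (x v t, t) :=
    (isOpen_Ioo.prod isOpen_Ioo).mem_nhds ⟨hξ, ht⟩
  have hux_xt : ux (x v t) t * xt v t + ut (x v t) t = 0 :=
    ((HasDerivAt.uncurry_comp (eventually_of_mem hmem fun q hq => hux q.1 hq.1 q.2 hq.2)
      (eventually_of_mem hmem fun q hq => hut q.1 hq.1 q.2 hq.2) (hcux.continuousAt hmem)
      (hcut.continuousAt hmem) (hxt v hv t ht)).congr_of_eventuallyEq
      (eventuallyEq_of_mem (isOpen_Ioo.mem_nhds ht) fun s hs => (hinv2 v hv s hs).symm)).unique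
      (hasDerivAt_const t v)
  have hxu_pos : 0 < xu v t :=
    pos_of_mul_pos_right ((hux_xu v hv).symm ▸ one_pos) (huxpos _ hξ t ht).le
  have hpde_v := hpde (x v t) hξ t ht
  rw [hinv2 v hv t ht] at hpde_v
  rw [eq_inv_of_mul_eq_one_left (hux_xu v hv)] at huxx_xu hux_xt hpde_v
  field_simp at huxx_xu hux_xt hpde_v
  refine ⟨hxu_pos, ?_⟩
  rw [eq_div_iff (by positivity)]
  linear_combination (xu v t) ^ 2 * hux_xt - hpde_v - huxx_xu
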